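/- The prime Chacon map T is totally ergodic: for every integer n ≥ 1, the transformation T^n is ergodic with respect to μ. -/

import Mathlib

open MeasureTheory Filter Topology
open scoped symmDiff

/-- A Chacon-type rank-one map (cutting into 3, spacer sequence `s` over the middle
column), acting on a probability space `(X, μ)`. -/
structure ChaconMap {X : Type*} [MeasurableSpace X]
    (μ : Measure X) (s : ℕ → ℕ) : Type _ where
  /-- The transformation, an invertible bimeasurable map. -/
  T : X ≃ᵐ X
  measurePreserving : MeasurePreserving T μ μ
  /-- The tower heights (number of levels is `h j + 1`). -/
  h : ℕ → ℕ
  h_one : h 1 = 1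
  h_succ : ∀ j, 1 ≤ j → h (j + 1) = 3 * h j + 2 + s j
  /-- The base of the `j`-th tower. -/
  E : ℕ → Set X
  E1 : ℕ → Set X
  E2 : ℕ → Set X
  E3 : ℕ → Set X
  measE : ∀ j, MeasurableSet (E j)
  measE1 : ∀ j, MeasurableSet (E1 j)
  measE2 : ∀ j, MeasurableSet (E2 j)
  measE3 : ∀ j, MeasurableSet (E3 j)
  /-- (i) the levels of the `j`-th tower are pairwise disjoint. -/
  tower_disjoint : ∀ j, 1 ≤ j → ∀ i ≤ h j, ∀ i' ≤ h j, i ≠ i' →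
    Disjoint ((⇑T)^[i] '' E j) ((⇑T)^[i'] '' E j)
  /-- (ii) the base is cut into three pieces of equal measure. -/
  E_union : ∀ j, 1 ≤ j → E j = E1 j ∪ E2 j ∪ E3 j
  E_disj12 : ∀ j, 1 ≤ j → Disjoint (E1 j) (E2 j)
  E_disj13 : ∀ j, 1 ≤ j → Disjoint (E1 j) (E3 j)
  E_disj23 : ∀ j, 1 ≤ j → Disjoint (E2 j) (E3 j)
  E_meas12 : ∀ j, 1 ≤ j → μ (E1 j) = μ (E2 j)
  E_meas23 : ∀ j, 1 ≤ j → μ (E2 j) = μ (E3 j)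
  E_next : ∀ j, 1 ≤ j → E (j + 1) = E1 j
  /-- (iii) stacking: the top of the first column is sent to the base of the second. -/
  stack1 : ∀ j, 1 ≤ j → μ (((⇑T)^[h j + 1] '' E1 j) ∆ E2 j) = 0
  /-- (iii) stacking: the top spacer over the second column is sent to the third base. -/
  stack2 : ∀ j, 1 ≤ j → μ (((⇑T)^[h j + 1 + s j] '' E2 j) ∆ E3 j) = 0
  /-- (iii) the spacer levels are disjoint from the `j`-th tower. -/
  spacer_disjoint : ∀ j, 1 ≤ j → ∀ i, 1 ≤ i → i ≤ s j → ∀ i' ≤ h j,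
    Disjoint ((⇑T)^[h j + i] '' E2 j) ((⇑T)^[i'] '' E j)
  /-- (iv) the towers fill up the whole space. -/
  tower_full : Tendsto (fun j => μ (⋃ i ∈ Finset.range (h j + 1), (⇑T)^[i] '' E j))
    atTop (𝓝 1)
  /-- (iv) the levels of the towers generate the full σ-algebra mod `μ`. -/
  generates : ∀ A : Set X, MeasurableSet A → ∃ B : Set X,
    MeasurableSet[MeasurableSpace.generateFrom
      {S : Set X | ∃ j, 1 ≤ j ∧ ∃ i ≤ h j, S = (⇑T)^[i] '' E j}] B ∧ μ (A ∆ B) = 0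

/-!
For a `T^n`-invariant set `A`, the mass of `A` on level `i` of the `j`-th tower depends only on
`i mod n`. Since the levels generate, `A` is for large `j` nearly a union of levels of the `j`-th
tower, and counting the roughly `h j / n` levels in each residue class shows that every level is
then nearly full or nearly empty of `A`. Level `i` of tower `j` is cut into the levels `i`,
`i + h j + 1` and `i + 2 h j + 2 + s j` of tower `j + 1`, and the full/empty pattern passes to
these pieces. Hence from some `J` on the pattern is the same for all towers and is invariant under
the shifts `h j + 1` and `2 h j + 2 + s j`, hence under `s j`. When `s j` is coprime to `n` for
infinitely many `j` (for the prime Chacon map, as soon as `p (j) > n`), the pattern is constant,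
so `A` is null or conull.
-/

theorem min_le_min_add_min {x y a b a' b' : ℝ} (hx : x ≤ a + a') (hy : y ≤ min b b')
    (ha : 0 ≤ a) (ha' : 0 ≤ a') (hb : 0 ≤ b) : min x y ≤ min a b + min a' b' := by
  have := min_le_left b b'
  have := min_le_right b b'
  rcases le_total a b with h | h <;> rcases le_total a' b' with h' | h' <;>
    simp only [min_eq_left, min_eq_right, h, h'] <;>
    first
    | exact min_le_of_left_le (by linarith)
    | exact min_le_of_right_le (by linarith)

-- `a, b` are the masses of `A, Aᶜ` on a level and `a', b'` those on one of the three levels of the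
-- next tower inside it: if the minority has less than a quarter of the mass on both, the majority
-- is the same on both.
theorem lt_iff_lt_of_le_of_four_mul_min_lt {a b a' b' : ℝ} (ha : a' ≤ a) (hb : b' ≤ b)
    (hsum : a + b = 3 * (a' + b')) (h : 4 * min a b < a + b) (h' : 4 * min a' b' < a' + b') :
    b' < a' ↔ b < a := by
  rcases le_total a b with hab | hab <;> rcases le_total a' b' with hab' | hab' <;>
    simp only [min_eq_left, min_eq_right, hab, hab'] at h h' <;>
    constructor <;> intro <;> linarith

theorem Function.Periodic.eq_zero_of_coprime {α : Type*} {f : ℕ → α} {m n : ℕ}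
    (hm : Function.Periodic f m) (hn : Function.Periodic f n) (hmn : m.Coprime n) (x : ℕ) :
    f x = f 0 := by
  suffices h1 : Function.Periodic f 1 by simpa using h1.nat_mul_eq x
  rcases lt_or_ge 1 n with hn1 | hn1
  · obtain ⟨k, -, hk⟩ := Nat.exists_mul_mod_eq_one_of_coprime hmn hn1
    intro x
    rw [← hn.nat_mul (m * k / n) (x + 1), ← hm.nat_mul k x]
    congr 1
    have := Nat.mod_add_div (m * k) n
    rw [hk] at this
    linarith
  · interval_cases n
    · obtain rfl := (Nat.coprime_zero_right m).1 hmn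
      exact hm
    · simpa using hn

namespace MeasurableEquiv

variable {X : Type*} [MeasurableSpace X] (T : X ≃ᵐ X)

theorem iterate_image_eq_preimage (i : ℕ) (S : Set X) :
    (⇑T)^[i] '' S = (⇑T.symm)^[i] ⁻¹' S :=
  congrFun (Set.image_eq_preimage_of_inverse (Function.LeftInverse.iterate T.symm_apply_apply i)
    (Function.RightInverse.iterate T.apply_symm_apply i)) S

theorem measurableSet_iterate_image {S : Set X} (hS : MeasurableSet S) (i : ℕ) :
    MeasurableSet ((⇑T)^[i] '' S) := by
  rw [iterate_image_eq_preimage]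
  exact T.symm.measurable.iterate i hS

variable {μ : Measure X} {T} (hT : MeasurePreserving T μ μ)
include hT

theorem measure_iterate_image (i : ℕ) {S : Set X} (hS : NullMeasurableSet S μ) :
    μ ((⇑T)^[i] '' S) = μ S := by
  rw [iterate_image_eq_preimage]
  exact ((hT.symm T).iterate i).measure_preimage hS

theorem iterate_image_ae_eq (i : ℕ) {S R : Set X} (h : S =ᵐ[μ] R) :
    (⇑T)^[i] '' S =ᵐ[μ] (⇑T)^[i] '' R := by
  simp only [iterate_image_eq_preimage]
  exact ((hT.symm T).iterate i).quasiMeasurePreserving.preimage_ae_eq h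

end MeasurableEquiv

namespace ChaconMap

variable {X : Type*} [MeasurableSpace X] {μ : Measure X} {s : ℕ → ℕ} (C : ChaconMap μ s)
  {j : ℕ}

def level (j i : ℕ) : Set X := (⇑C.T)^[i] '' C.E j

def tower (j : ℕ) : Set X := ⋃ i ∈ Finset.range (C.h j + 1), C.level j i

theorem measurableSet_level (j i : ℕ) : MeasurableSet (C.level j i) :=
  C.T.measurableSet_iterate_image (C.measE j) i

theorem measurableSet_tower (j : ℕ) : MeasurableSet (C.tower j) :=
  .biUnion (Finset.countable_toSet _) fun i _ ↦ C.measurableSet_level j i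

theorem measure_level (j i : ℕ) : μ (C.level j i) = μ (C.E j) :=
  C.T.measure_iterate_image C.measurePreserving i (C.measE j).nullMeasurableSet

theorem disjoint_level (hj : 1 ≤ j) {i i' : ℕ} (hi : i ∈ Finset.range (C.h j + 1))
    (hi' : i' ∈ Finset.range (C.h j + 1)) (hne : i ≠ i') :
    Disjoint (C.level j i) (C.level j i') :=
  C.tower_disjoint j hj i (Nat.lt_succ_iff.1 (Finset.mem_range.1 hi))
    i' (Nat.lt_succ_iff.1 (Finset.mem_range.1 hi')) hne

theorem level_eq_union (hj : 1 ≤ j) (i : ℕ) :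
    C.level j i = (⇑C.T)^[i] '' C.E1 j ∪ (⇑C.T)^[i] '' C.E2 j ∪ (⇑C.T)^[i] '' C.E3 j := by
  rw [level, C.E_union j hj, Set.image_union, Set.image_union]

theorem level_succ (hj : 1 ≤ j) (i : ℕ) : C.level (j + 1) i = (⇑C.T)^[i] '' C.E1 j := by
  rw [level, C.E_next j hj]

theorem image_E2_ae_eq (hj : 1 ≤ j) (i : ℕ) :
    (⇑C.T)^[i] '' C.E2 j =ᵐ[μ] C.level (j + 1) (i + (C.h j + 1)) := by
  rw [level, C.E_next j hj, Function.iterate_add, Set.image_comp]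
  exact C.T.iterate_image_ae_eq C.measurePreserving i
    (measure_symmDiff_eq_zero_iff.1 (C.stack1 j hj)).symm

theorem image_E3_ae_eq (hj : 1 ≤ j) (i : ℕ) :
    (⇑C.T)^[i] '' C.E3 j =ᵐ[μ] C.level (j + 1) (i + (2 * C.h j + 2 + s j)) := by
  have hT := C.measurePreserving
  rw [show i + (2 * C.h j + 2 + s j) = i + (C.h j + 1 + s j) + (C.h j + 1) by ring, level,
    C.E_next j hj, Function.iterate_add, Set.image_comp, Function.iterate_add, Set.image_comp]
  refine C.T.iterate_image_ae_eq hT i ?_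
  exact (measure_symmDiff_eq_zero_iff.1 (C.stack2 j hj)).symm.trans
    (C.T.iterate_image_ae_eq hT _ (measure_symmDiff_eq_zero_iff.1 (C.stack1 j hj)).symm)

theorem level_ae_eq_union (hj : 1 ≤ j) (i : ℕ) :
    C.level j i =ᵐ[μ] (C.level (j + 1) i ∪ C.level (j + 1) (i + (C.h j + 1))
      ∪ C.level (j + 1) (i + (2 * C.h j + 2 + s j)) : Set X) := by
  rw [C.level_eq_union hj, C.level_succ hj]
  exact ae_eq_set_union (ae_eq_set_union (ae_eq_refl _) (C.image_E2_ae_eq hj i))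
    (C.image_E3_ae_eq hj i)

theorem tendsto_measureReal_tower : Tendsto (fun j ↦ μ.real (C.tower j)) atTop (𝓝 1) :=
  (ENNReal.tendsto_toReal ENNReal.one_ne_top).comp C.tower_full

/-- The `μ`-distance, inside the `j`-th tower, from `B` to the nearest union of levels of
that tower. -/
def levelDefect (B : Set X) (j : ℕ) : ℝ :=
  ∑ i ∈ Finset.range (C.h j + 1), min (μ.real (B ∩ C.level j i)) (μ.real (Bᶜ ∩ C.level j i))

theorem levelDefect_nonneg (B : Set X) (j : ℕ) : 0 ≤ C.levelDefect B j :=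
  Finset.sum_nonneg fun _ _ ↦ le_min measureReal_nonneg measureReal_nonneg

theorem levelDefect_compl (B : Set X) : C.levelDefect Bᶜ = C.levelDefect B := by
  funext j
  simp only [levelDefect, compl_compl, min_comm]

theorem levelDefect_congr {B B' : Set X} (h : B =ᵐ[μ] B') :
    C.levelDefect B = C.levelDefect B' := by
  refine funext fun j ↦ Finset.sum_congr rfl fun i _ ↦ ?_
  rw [measureReal_congr (ae_eq_set_inter h (ae_eq_refl (C.level j i))),
    measureReal_congr (ae_eq_set_inter h.compl (ae_eq_refl (C.level j i)))]

theorem levelDefect_empty (j : ℕ) : C.levelDefect ∅ j = 0 :=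
  Finset.sum_eq_zero fun _ _ ↦ by simp

theorem levelDefect_biUnion_level (hj : 1 ≤ j) {S : Finset ℕ}
    (hS : S ⊆ Finset.range (C.h j + 1)) : C.levelDefect (⋃ i ∈ S, C.level j i) j = 0 := by
  refine Finset.sum_eq_zero fun i hi ↦ ?_
  by_cases hiS : i ∈ S
  · have hsub : C.level j i ⊆ ⋃ i' ∈ S, C.level j i' :=
      Set.subset_iUnion₂ (s := fun i' (_ : i' ∈ S) ↦ C.level j i') i hiS
    rw [Set.eq_empty_of_forall_notMem (s := (⋃ i' ∈ S, C.level j i')ᶜ ∩ C.level j i)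
      fun x hx ↦ hx.1 (hsub hx.2), measureReal_empty]
    exact min_eq_right measureReal_nonneg
  · have hdisj : Disjoint (⋃ i' ∈ S, C.level j i') (C.level j i) :=
      Set.disjoint_iUnion₂_left.2 fun i' hi' ↦
        C.disjoint_level hj (hS hi') hi (ne_of_mem_of_not_mem hi' hiS)
    rw [hdisj.inter_eq, measureReal_empty]
    exact min_eq_left measureReal_nonneg

theorem exists_ae_eq_biUnion_level {j₀ i : ℕ} (hj₀ : 1 ≤ j₀) (hi : i ≤ C.h j₀) :
    ∀ j ≥ j₀, ∃ S ⊆ Finset.range (C.h j + 1), C.level j₀ i =ᵐ[μ] ⋃ i' ∈ S, C.level j i' := by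
  intro j hj
  induction j, hj using Nat.le_induction with
  | base => exact ⟨{i}, by simpa [Nat.lt_succ_iff] using hi,
      by rw [Finset.set_biUnion_singleton]; exact ae_eq_refl _⟩
  | succ j hj ih =>
    obtain ⟨S, hS, hae⟩ := ih
    refine ⟨S.biUnion fun i' ↦ {i', i' + (C.h j + 1), i' + (2 * C.h j + 2 + s j)}, ?_, ?_⟩
    · intro i' hi'
      simp only [Finset.mem_biUnion, Finset.mem_insert, Finset.mem_singleton] at hi'
      obtain ⟨i'', hi'', rfl | rfl | rfl⟩ := hi'
      all_goals
        have := Finset.mem_range.1 (hS hi'')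
        have := C.h_succ j (hj₀.trans hj)
        simp only [Finset.mem_range]
        omega
    · refine hae.trans ?_
      simp only [Finset.set_biUnion_biUnion, Finset.set_biUnion_insert,
        Finset.set_biUnion_singleton, ← Set.union_assoc]
      exact ae_eq_set_biUnion S.countable_toSet fun i' _ ↦ C.level_ae_eq_union (hj₀.trans hj) i'

theorem tendsto_levelDefect_level {j₀ i : ℕ} (hj₀ : 1 ≤ j₀)
    (hi : i ≤ C.h j₀) : Tendsto (C.levelDefect (C.level j₀ i)) atTop (𝓝 0) := by
  refine tendsto_const_nhds.congr' ?_
  filter_upwards [eventually_ge_atTop j₀] with j hj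
  obtain ⟨S, hS, hae⟩ := C.exists_ae_eq_biUnion_level hj₀ hi j hj
  rw [C.levelDefect_congr hae, C.levelDefect_biUnion_level (hj₀.trans hj) hS]

def IsMajority (A : Set X) (j i : ℕ) : Prop :=
  μ.real (Aᶜ ∩ C.level j i) < μ.real (A ∩ C.level j i)

def IsNearlyFullOrEmpty (A : Set X) (j : ℕ) : Prop :=
  ∀ i, 4 * min (μ.real (A ∩ C.level j i)) (μ.real (Aᶜ ∩ C.level j i)) < μ.real (C.E j)

section FiniteMeasure

variable [IsFiniteMeasure μ]

theorem measureReal_E_succ (hj : 1 ≤ j) : μ.real (C.E j) = 3 * μ.real (C.E (j + 1)) := by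
  have h12 : μ.real (C.E1 j) = μ.real (C.E2 j) := congrArg ENNReal.toReal (C.E_meas12 j hj)
  have h23 : μ.real (C.E2 j) = μ.real (C.E3 j) := congrArg ENNReal.toReal (C.E_meas23 j hj)
  rw [C.E_union j hj, measureReal_union ((C.E_disj13 j hj).union_left (C.E_disj23 j hj))
    (C.measE3 j), measureReal_union (C.E_disj12 j hj) (C.measE2 j), C.E_next j hj]
  linarith

theorem tendsto_measureReal_E : Tendsto (fun j ↦ μ.real (C.E j)) atTop (𝓝 0) := by
  have hgeom : ∀ k, μ.real (C.E (k + 1)) = μ.real (C.E 1) * (1 / 3) ^ k := by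
    intro k
    induction k with
    | zero => simp
    | succ k ih =>
      rw [pow_succ, ← mul_assoc, ← ih, C.measureReal_E_succ (by omega : 1 ≤ k + 1)]
      ring
  rw [← tendsto_add_atTop_iff_nat 1]
  refine Tendsto.congr (fun k ↦ (hgeom k).symm) ?_
  simpa using (tendsto_pow_atTop_nhds_zero_of_lt_one (by norm_num : (0 : ℝ) ≤ 1 / 3)
    (by norm_num)).const_mul (μ.real (C.E 1))

theorem sum_measureReal_inter_level (hj : 1 ≤ j) {B : Set X} (hB : MeasurableSet B) :
    ∑ i ∈ Finset.range (C.h j + 1), μ.real (B ∩ C.level j i) = μ.real (B ∩ C.tower j) := by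
  rw [tower, Set.inter_iUnion₂, measureReal_biUnion_finset
    (fun i hi i' hi' hne ↦ (C.disjoint_level hj hi hi' hne).mono Set.inter_subset_right
      Set.inter_subset_right)
    fun i _ ↦ hB.inter (C.measurableSet_level j i)]

theorem measureReal_tower (hj : 1 ≤ j) : μ.real (C.tower j) = (C.h j + 1) * μ.real (C.E j) := by
  have := C.sum_measureReal_inter_level hj MeasurableSet.univ
  simp only [Set.univ_inter] at this
  rw [← this]
  simp [measureReal_def, C.measure_level]

theorem measureReal_inter_level (hj : 1 ≤ j) {B : Set X} (hB : MeasurableSet B) (i : ℕ) :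
    μ.real (B ∩ C.level j i) = μ.real (B ∩ C.level (j + 1) i)
      + μ.real (B ∩ C.level (j + 1) (i + (C.h j + 1)))
      + μ.real (B ∩ C.level (j + 1) (i + (2 * C.h j + 2 + s j))) := by
  have hinj := C.T.injective.iterate i
  have h12 := (Set.disjoint_image_iff hinj).2 (C.E_disj12 j hj)
  have h13 := (Set.disjoint_image_iff hinj).2 (C.E_disj13 j hj)
  have h23 := (Set.disjoint_image_iff hinj).2 (C.E_disj23 j hj)
  have hm2 := C.T.measurableSet_iterate_image (C.measE2 j) i
  have hm3 := C.T.measurableSet_iterate_image (C.measE3 j) i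
  rw [C.level_eq_union hj, Set.inter_union_distrib_left, Set.inter_union_distrib_left,
    measureReal_union (Disjoint.union_left (h13.mono Set.inter_subset_right Set.inter_subset_right)
      (h23.mono Set.inter_subset_right Set.inter_subset_right)) (hB.inter hm3),
    measureReal_union (h12.mono Set.inter_subset_right Set.inter_subset_right) (hB.inter hm2),
    C.level_succ hj, measureReal_congr (ae_eq_set_inter (ae_eq_refl B) (C.image_E2_ae_eq hj i)),
    measureReal_congr (ae_eq_set_inter (ae_eq_refl B) (C.image_E3_ae_eq hj i))]

theorem measureReal_inter_level_add_compl {B : Set X} (hB : MeasurableSet B) (j i : ℕ) :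
    μ.real (B ∩ C.level j i) + μ.real (Bᶜ ∩ C.level j i) = μ.real (C.E j) := by
  rw [Set.inter_comm B, Set.inter_comm Bᶜ, ← Set.sdiff_eq, measureReal_inter_add_sdiff hB]
  simp [measureReal_def, C.measure_level]

theorem levelDefect_union_le (B B' : Set X) (j : ℕ) :
    C.levelDefect (B ∪ B') j ≤ C.levelDefect B j + C.levelDefect B' j := by
  rw [levelDefect, levelDefect, levelDefect, ← Finset.sum_add_distrib]
  refine Finset.sum_le_sum fun i _ ↦ min_le_min_add_min ?_ (le_min ?_ ?_) measureReal_nonneg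
    measureReal_nonneg measureReal_nonneg
  · rw [Set.union_inter_distrib_right]
    exact measureReal_union_le _ _
  · exact measureReal_mono (by gcongr; exact Set.subset_union_left)
  · exact measureReal_mono (by gcongr; exact Set.subset_union_right)

theorem levelDefect_le_measureReal (hj : 1 ≤ j) {B : Set X} (hB : MeasurableSet B) :
    C.levelDefect B j ≤ μ.real B :=
  calc C.levelDefect B j ≤ ∑ i ∈ Finset.range (C.h j + 1), μ.real (B ∩ C.level j i) :=
        Finset.sum_le_sum fun _ _ ↦ min_le_left _ _
    _ = μ.real (B ∩ C.tower j) := C.sum_measureReal_inter_level hj hB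
    _ ≤ μ.real B := measureReal_mono Set.inter_subset_left

theorem levelDefect_accumulate_le (f : ℕ → Set X) (j K : ℕ) :
    C.levelDefect (Set.accumulate f K) j ≤ ∑ k ∈ Finset.range (K + 1), C.levelDefect (f k) j := by
  induction K with
  | zero => simp [Set.accumulate_zero_nat]
  | succ K ih =>
    rw [Set.accumulate_succ, Finset.sum_range_succ]
    exact (C.levelDefect_union_le _ _ j).trans (by gcongr)

theorem tendsto_levelDefect_iUnion {f : ℕ → Set X} (hf : ∀ k, MeasurableSet (f k))
    (h : ∀ k, Tendsto (C.levelDefect (f k)) atTop (𝓝 0)) :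
    Tendsto (C.levelDefect (⋃ k, f k)) atTop (𝓝 0) := by
  have hacc : ∀ K, MeasurableSet (Set.accumulate f K) := fun K ↦
    MeasurableSet.iUnion fun k ↦ MeasurableSet.iUnion fun _ ↦ hf k
  have htail : Tendsto (fun K ↦ μ.real ((⋃ k, f k) \ Set.accumulate f K)) atTop (𝓝 0) := by
    have := (ENNReal.tendsto_toReal (measure_ne_top μ _)).comp
      (tendsto_measure_iUnion_accumulate (μ := μ) (f := f))
    have hsdiff : ∀ K, μ.real ((⋃ k, f k) \ Set.accumulate f K)
        = μ.real (⋃ k, f k) - μ.real (Set.accumulate f K) := fun K ↦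
      measureReal_sdiff (Set.accumulate_subset_iUnion K) (hacc K)
    simp only [hsdiff]
    simpa [measureReal_def] using (tendsto_const_nhds (x := μ.real (⋃ k, f k))).sub this
  have hbound : ∀ j ≥ 1, ∀ K, C.levelDefect (⋃ k, f k) j ≤
      ∑ k ∈ Finset.range (K + 1), C.levelDefect (f k) j
        + μ.real ((⋃ k, f k) \ Set.accumulate f K) := by
    intro j hj K
    calc C.levelDefect (⋃ k, f k) j
        = C.levelDefect (Set.accumulate f K ∪ ((⋃ k, f k) \ Set.accumulate f K)) j := by
          rw [Set.union_sdiff_cancel (Set.accumulate_subset_iUnion K)]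
      _ ≤ _ := (C.levelDefect_union_le _ _ j).trans (add_le_add
          (C.levelDefect_accumulate_le f j K)
          (C.levelDefect_le_measureReal hj ((MeasurableSet.iUnion hf).diff (hacc K))))
  refine tendsto_order.2 ⟨fun ε hε ↦ Eventually.of_forall fun j ↦
    hε.trans_le (C.levelDefect_nonneg _ j), fun ε hε ↦ ?_⟩
  obtain ⟨K, hK⟩ := (htail.eventually (gt_mem_nhds (half_pos hε))).exists
  have hsum : Tendsto (fun j ↦ ∑ k ∈ Finset.range (K + 1), C.levelDefect (f k) j) atTop (𝓝 0) := by
    simpa using tendsto_finsetSum (Finset.range (K + 1)) fun k _ ↦ h k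
  filter_upwards [hsum.eventually (gt_mem_nhds (half_pos hε)), eventually_ge_atTop 1]
    with j hj hj1
  linarith [hbound j hj1 K]

theorem tendsto_levelDefect {B : Set X} (hB : MeasurableSet B) :
    Tendsto (C.levelDefect B) atTop (𝓝 0) := by
  obtain ⟨B', hB', hBB'⟩ := C.generates B hB
  rw [C.levelDefect_congr (measure_symmDiff_eq_zero_iff.1 hBB')]
  clear hB hBB'
  have hle : MeasurableSpace.generateFrom
      {S : Set X | ∃ j, 1 ≤ j ∧ ∃ i ≤ C.h j, S = (⇑C.T)^[i] '' C.E j} ≤ ‹_› :=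
    MeasurableSpace.generateFrom_le fun _ ⟨j, _, i, _, hS⟩ ↦ hS ▸ C.measurableSet_level j i
  induction B', hB' using MeasurableSpace.generateFrom_induction with
  | hC t ht =>
    obtain ⟨j₀, hj₀, i, hi, rfl⟩ := ht
    exact C.tendsto_levelDefect_level hj₀ hi
  | empty =>
    rw [funext C.levelDefect_empty]
    exact tendsto_const_nhds
  | compl t _ ih => rwa [C.levelDefect_compl]
  | iUnion f hf ih => exact C.tendsto_levelDefect_iUnion (fun k ↦ hle _ (hf k)) ih

theorem isMajority_succ_iff {A : Set X} (hA : MeasurableSet A) (hj : 1 ≤ j)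
    (hfe : C.IsNearlyFullOrEmpty A j) (hfe' : C.IsNearlyFullOrEmpty A (j + 1)) (i t : ℕ)
    (ht : t = 0 ∨ t = C.h j + 1 ∨ t = 2 * C.h j + 2 + s j) :
    C.IsMajority A (j + 1) (i + t) ↔ C.IsMajority A j i := by
  have hpiece : ∀ B, MeasurableSet B →
      μ.real (B ∩ C.level (j + 1) (i + t)) ≤ μ.real (B ∩ C.level j i) := by
    intro B hB
    have := C.measureReal_inter_level hj hB i
    have : 0 ≤ μ.real (B ∩ C.level (j + 1) i) := measureReal_nonneg
    have : 0 ≤ μ.real (B ∩ C.level (j + 1) (i + (C.h j + 1))) := measureReal_nonneg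
    have : 0 ≤ μ.real (B ∩ C.level (j + 1) (i + (2 * C.h j + 2 + s j))) := measureReal_nonneg
    rcases ht with rfl | rfl | rfl <;> (try simp only [add_zero]) <;> linarith
  refine lt_iff_lt_of_le_of_four_mul_min_lt (hpiece A hA) (hpiece Aᶜ hA.compl) ?_ ?_ ?_
  · rw [C.measureReal_inter_level_add_compl hA, C.measureReal_inter_level_add_compl hA,
      C.measureReal_E_succ hj]
  · rw [C.measureReal_inter_level_add_compl hA]
    exact hfe i
  · rw [C.measureReal_inter_level_add_compl hA]
    exact hfe' (i + t)

theorem isMajority_eq_of_le {A : Set X} (hA : MeasurableSet A) {J : ℕ}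
    (hJ : ∀ j ≥ J, 1 ≤ j ∧ C.IsNearlyFullOrEmpty A j) :
    ∀ j ≥ J, C.IsMajority A j = C.IsMajority A J := by
  intro j hj
  induction j, hj using Nat.le_induction with
  | base => rfl
  | succ j hj ih =>
    refine ih ▸ funext fun i ↦ propext ?_
    exact C.isMajority_succ_iff hA (hJ j hj).1 (hJ j hj).2 (hJ (j + 1) (by omega)).2 i 0
      (Or.inl rfl)

theorem periodic_isMajority_spacer {A : Set X} (hA : MeasurableSet A) {J : ℕ}
    (hJ : ∀ j ≥ J, 1 ≤ j ∧ C.IsNearlyFullOrEmpty A j) (hj : J ≤ j) :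
    Function.Periodic (C.IsMajority A J) (s j) := by
  have hshift : ∀ t, (t = 0 ∨ t = C.h j + 1 ∨ t = 2 * C.h j + 2 + s j) →
      Function.Periodic (C.IsMajority A J) t := fun t ht x ↦ by
    have := C.isMajority_succ_iff hA (hJ j hj).1 (hJ j hj).2 (hJ (j + 1) (by omega)).2 x t ht
    rw [C.isMajority_eq_of_le hA hJ j hj, C.isMajority_eq_of_le hA hJ (j + 1) (by omega)] at this
    exact propext this
  have hfirst := hshift _ (Or.inr (Or.inl rfl))
  intro x
  -- `2 h j + 2 + s j = s j + 2 (h j + 1)`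
  rw [← hshift _ (Or.inr (Or.inr rfl)) x, ← hfirst (x + s j), ← hfirst (x + s j + (C.h j + 1))]
  ring_nf

end FiniteMeasure

theorem measure_eq_zero_of_eventually_not_isMajority [IsProbabilityMeasure μ] {B : Set X}
    (hB : MeasurableSet B) (h : ∀ᶠ j in atTop, ∀ i, ¬ C.IsMajority B j i) : μ B = 0 := by
  have hbound : ∀ᶠ j in atTop, μ.real B ≤ C.levelDefect B j + (1 - μ.real (C.tower j)) := by
    filter_upwards [h, eventually_ge_atTop 1] with j hj hj1
    have hinside : C.levelDefect B j = μ.real (B ∩ C.tower j) := by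
      rw [← C.sum_measureReal_inter_level hj1 hB]
      exact Finset.sum_congr rfl fun i _ ↦ min_eq_left (not_lt.1 (hj i))
    have houtside : μ.real (B \ C.tower j) ≤ 1 - μ.real (C.tower j) := by
      rw [← probReal_compl_eq_one_sub (C.measurableSet_tower j)]
      exact measureReal_mono fun x hx ↦ hx.2
    linarith [measureReal_inter_add_sdiff (μ := μ) (s := B) (C.measurableSet_tower j)]
  have hlim : Tendsto (fun j ↦ C.levelDefect B j + (1 - μ.real (C.tower j))) atTop (𝓝 0) := by
    simpa using (C.tendsto_levelDefect hB).add
      ((tendsto_const_nhds (x := (1 : ℝ))).sub C.tendsto_measureReal_tower)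
  exact (measureReal_eq_zero_iff (μ := μ)).1
    (le_antisymm (ge_of_tendsto hlim hbound) measureReal_nonneg)

section Invariant

variable {n : ℕ} {A : Set X} (hA : MeasurableSet A) (hinv : (⇑C.T)^[n] ⁻¹' A = A)
include hA hinv

theorem measureReal_inter_level_add_period (j i : ℕ) :
    μ.real (A ∩ C.level j (i + n)) = μ.real (A ∩ C.level j i) := by
  have hshift : A ∩ C.level j (i + n) = (⇑C.T)^[n] '' (C.level j i ∩ A) := by
    conv_rhs => rw [← hinv, Set.image_inter_preimage]
    rw [Set.inter_comm A, level, level, add_comm i n, Function.iterate_add, Set.image_comp]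
  rw [hshift, measureReal_def, measureReal_def, C.T.measure_iterate_image C.measurePreserving n
    ((C.measurableSet_level j i).inter hA).nullMeasurableSet, Set.inter_comm]

theorem measureReal_compl_inter_level_add_period (j i : ℕ) :
    μ.real (Aᶜ ∩ C.level j (i + n)) = μ.real (Aᶜ ∩ C.level j i) :=
  C.measureReal_inter_level_add_period hA.compl (by rw [Set.preimage_compl, hinv]) j i

theorem isMajority_periodic (j : ℕ) : Function.Periodic (C.IsMajority A j) n := fun i ↦ by
  simp only [IsMajority, C.measureReal_inter_level_add_period hA hinv,
    C.measureReal_compl_inter_level_add_period hA hinv]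

theorem mul_min_le_levelDefect (hn : 0 < n) (j i : ℕ) :
    ((C.h j + 1) / n : ℕ) * min (μ.real (A ∩ C.level j i)) (μ.real (Aᶜ ∩ C.level j i))
      ≤ C.levelDefect A j := by
  set m : ℕ → ℝ := fun i ↦ min (μ.real (A ∩ C.level j i)) (μ.real (Aᶜ ∩ C.level j i))
  have hper : Function.Periodic m n := fun i ↦ by
    simp only [m, C.measureReal_inter_level_add_period hA hinv,
      C.measureReal_compl_inter_level_add_period hA hinv]
  set c := (C.h j + 1) / n
  have hsub : (Finset.range c).image (fun k ↦ i % n + k * n) ⊆ Finset.range (C.h j + 1) := by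
    intro i' hi'
    obtain ⟨k, hk, rfl⟩ := Finset.mem_image.1 hi'
    have h1 : (k + 1) * n ≤ c * n := Nat.mul_le_mul_right n (Finset.mem_range.1 hk)
    have h2 : c * n ≤ C.h j + 1 := Nat.div_mul_le_self _ _
    have h3 : i % n < n := Nat.mod_lt i hn
    rw [Finset.mem_range]
    nlinarith
  calc (c : ℝ) * m i = ∑ k ∈ Finset.range c, m (i % n + k * n) := by
        have hrep : ∀ k, m (i % n + k * n) = m i := fun k ↦ by
          rw [← hper.map_mod_nat i]
          simpa using hper.nat_mul k (i % n)
        rw [Finset.sum_congr rfl fun k _ ↦ hrep k, Finset.sum_const, Finset.card_range,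
          nsmul_eq_mul]
    _ = ∑ i' ∈ (Finset.range c).image (fun k ↦ i % n + k * n), m i' :=
        (Finset.sum_image fun _ _ _ _ h ↦ Nat.eq_of_mul_eq_mul_right hn
          (Nat.add_left_cancel h)).symm
    _ ≤ C.levelDefect A j :=
        Finset.sum_le_sum_of_subset_of_nonneg hsub fun _ _ _ ↦
          le_min measureReal_nonneg measureReal_nonneg

theorem eventually_isNearlyFullOrEmpty [IsFiniteMeasure μ] (hn : 0 < n) :
    ∀ᶠ j in atTop, C.IsNearlyFullOrEmpty A j := by
  have hE : Tendsto (fun j ↦ (n : ℝ) * μ.real (C.E j)) atTop (𝓝 0) := by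
    simpa using C.tendsto_measureReal_E.const_mul (n : ℝ)
  have hn' : (0 : ℝ) < n := Nat.cast_pos.2 hn
  filter_upwards [(C.tendsto_levelDefect hA).eventually (gt_mem_nhds (by positivity :
      (0 : ℝ) < 1 / (8 * n))),
    C.tendsto_measureReal_tower.eventually (lt_mem_nhds (by norm_num : (3 : ℝ) / 4 < 1)),
    hE.eventually (gt_mem_nhds (by norm_num : (0 : ℝ) < 1 / 4)), eventually_ge_atTop 1]
    with j hD htower he hj
  intro i
  set c := (C.h j + 1) / n
  have hcount := C.mul_min_le_levelDefect hA hinv hn j i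
  have hc : (C.h j + 1 : ℝ) ≤ c * n + n := by exact_mod_cast (Nat.lt_div_mul_add hn).le
  rw [C.measureReal_tower hj] at htower
  rw [lt_div_iff₀ (by positivity)] at hD
  have he0 : 0 ≤ μ.real (C.E j) := measureReal_nonneg
  set m := min (μ.real (A ∩ C.level j i)) (μ.real (Aᶜ ∩ C.level j i))
  have hm0 : 0 ≤ m := le_min measureReal_nonneg measureReal_nonneg
  have hlarge : 1 / 2 < n * c * μ.real (C.E j) := by nlinarith
  by_contra! hcon
  nlinarith [mul_le_mul_of_nonneg_left hcon (by positivity : (0 : ℝ) ≤ n * c)]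

theorem measure_eq_zero_or_measure_compl_eq_zero [IsProbabilityMeasure μ] (hn : 0 < n)
    (hs : ∃ᶠ j in atTop, (s j).Coprime n) : μ A = 0 ∨ μ Aᶜ = 0 := by
  obtain ⟨J, hJ⟩ := eventually_atTop.1
    ((eventually_ge_atTop 1).and (C.eventually_isNearlyFullOrEmpty hA hinv hn))
  obtain ⟨j, hcop, hj⟩ := (hs.and_eventually (eventually_ge_atTop J)).exists
  have hconst : ∀ j' ≥ J, ∀ i, C.IsMajority A j' i = C.IsMajority A J 0 := fun j' hj' i ↦ by
    rw [C.isMajority_eq_of_le hA hJ j' hj', (C.periodic_isMajority_spacer hA hJ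
      hj).eq_zero_of_coprime (C.isMajority_periodic hA hinv J) hcop i]
  by_cases h0 : C.IsMajority A J 0
  · right
    refine C.measure_eq_zero_of_eventually_not_isMajority hA.compl ?_
    filter_upwards [eventually_ge_atTop J] with j' hj' i
    rw [IsMajority, compl_compl]
    exact (hconst j' hj' i ▸ h0 : C.IsMajority A j' i).not_gt
  · left
    refine C.measure_eq_zero_of_eventually_not_isMajority hA ?_
    filter_upwards [eventually_ge_atTop J] with j' hj' i
    exact hconst j' hj' i ▸ h0

end Invariant

theorem ergodic_iterate [IsProbabilityMeasure μ] {n : ℕ} (hn : 0 < n)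
    (hs : ∃ᶠ j in atTop, (s j).Coprime n) : Ergodic (⇑C.T)^[n] μ where
  toMeasurePreserving := C.measurePreserving.iterate n
  aeconst_set _ hA hinv := eventuallyConst_set'.2 <|
    (C.measure_eq_zero_or_measure_compl_eq_zero hA hinv hn hs).imp ae_eq_empty.2 ae_eq_univ.2

end ChaconMap

/-- the prime Chacon map (spacer sequence `s j = p j`, the `j`-th prime)
is totally ergodic. -/
theorem primeChacon_totallyErgodic
    {X : Type*} [MeasurableSpace X] (μ : Measure X) [IsProbabilityMeasure μ]
    (C : ChaconMap μ (fun j => Nat.nth Nat.Prime (j - 1))) :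
    ∀ n : ℕ, 1 ≤ n → Ergodic ((⇑C.T)^[n]) μ := by
  intro n hn
  refine C.ergodic_iterate hn (Eventually.frequently ?_)
  filter_upwards [eventually_ge_atTop n] with j hj
  have hlarge := Nat.add_two_le_nth_prime (j - 1)
  exact (Nat.prime_nth_prime (j - 1)).coprime_iff_not_dvd.2 fun hdvd ↦
    absurd (Nat.le_of_dvd hn hdvd) (by omega)
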